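/- Let I be a monotone NAE3SAT instance over a finite variable set X, and let k ≥ 1. Then I is NAE-satisfiable if and only if the instance I^♯ is NAE-satisfiable. -/

import Mathlib

/-- An assignment `ν` NAE-satisfies a monotone NAE-SAT instance `I` (a finite set of
clauses, each a finite set of variables) if `ν` is not constant on any clause. -/
def NAESat {X : Type} (I : Finset (Finset X)) (ν : X → Bool) : Prop :=
  ∀ C ∈ I, ∃ x ∈ C, ∃ y ∈ C, ν x ≠ ν y

/-- An assignment `μ` of the variables `X × Fin (2k+1)` NAE-satisfies the Gottlob power
instance `I^♯`: for each clause `C` of `I` and each choice of a `(k+1)`-element subset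
`J x` of `Fin (2k+1)` for the variables `x ∈ C`, the assignment `μ` is not constant on
the corresponding `(3k+3)`-element clause `⋃ x ∈ C, {x} × J x`. -/
def SharpSat {X : Type} (k : ℕ) (I : Finset (Finset X))
    (μ : X × Fin (2 * k + 1) → Bool) : Prop :=
  ∀ C ∈ I, ∀ J : X → Finset (Fin (2 * k + 1)),
    (∀ x ∈ C, (J x).card = k + 1) →
      ∃ x ∈ C, ∃ j ∈ J x, ∃ y ∈ C, ∃ j' ∈ J y, μ (x, j) ≠ μ (y, j')

/-!
Copying each variable `2k+1` times turns a NAE-satisfying assignment of `I` into one of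
`I^♯`. Conversely, given a NAE-satisfying assignment `μ` of `I^♯`, give each variable `x`
the majority value `ν x` of `μ (x, ·)`, which is taken on at least `k+1` copies. If `ν`
were constant on a clause of `I`, choosing `k+1` such copies for each of its variables
would give a clause of `I^♯` on which `μ` is constant.
-/

open Finset

theorem exists_card_le_two_mul_card_filter_eq {ι : Type*} [Fintype ι] (f : ι → Bool) :
    ∃ b, Fintype.card ι ≤ 2 * #{i | f i = b} := by
  have hsplit := card_filter_add_card_filter_not (s := univ) (fun i => f i = true)
  simp only [Bool.not_eq_true, card_univ] at hsplit
  by_cases h : #{i | f i = false} ≤ #{i | f i = true}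
  · exact ⟨true, by omega⟩
  · exact ⟨false, by omega⟩

theorem exists_majority_value {k : ℕ} (f : Fin (2 * k + 1) → Bool) :
    ∃ b, k + 1 ≤ #{j | f j = b} := by
  obtain ⟨b, hb⟩ := exists_card_le_two_mul_card_filter_eq f
  exact ⟨b, by rw [Fintype.card_fin] at hb; omega⟩

variable {X : Type} {k : ℕ} {I : Finset (Finset X)}

theorem NAESat.sharpSat_comp_fst {ν : X → Bool} (hν : NAESat I ν) :
    SharpSat k I (ν ∘ Prod.fst) := by
  intro C hC J hJ
  obtain ⟨x, hx, y, hy, hxy⟩ := hν C hC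
  obtain ⟨j, hj⟩ := card_pos.mp (by rw [hJ x hx]; exact k.succ_pos)
  obtain ⟨j', hj'⟩ := card_pos.mp (by rw [hJ y hy]; exact k.succ_pos)
  exact ⟨x, hx, j, hj, y, hy, j', hj', hxy⟩

theorem SharpSat.naeSat_of_le_card_filter_eq {μ : X × Fin (2 * k + 1) → Bool}
    (hμ : SharpSat k I μ) {ν : X → Bool} (hν : ∀ x, k + 1 ≤ #{j | μ (x, j) = ν x}) :
    NAESat I ν := by
  intro C hC
  by_contra! hconst
  choose J hJsub hJcard using fun x => exists_subset_card_eq (hν x)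
  obtain ⟨x, hx, j, hj, y, hy, j', hj', hne⟩ := hμ C hC J fun x _ => hJcard x
  rw [(mem_filter.mp (hJsub x hj)).2, (mem_filter.mp (hJsub y hj')).2] at hne
  exact hne (hconst x hx y hy)

theorem stmt_6 {X : Type} (I : Finset (Finset X)) (k : ℕ) :
    (∃ ν : X → Bool, NAESat I ν) ↔
      ∃ μ : X × Fin (2 * k + 1) → Bool, SharpSat k I μ := by
  constructor
  · rintro ⟨ν, hν⟩
    exact ⟨_, hν.sharpSat_comp_fst⟩
  · rintro ⟨μ, hμ⟩
    choose ν hν using fun x => exists_majority_value fun j => μ (x, j)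
    exact ⟨ν, hμ.naeSat_of_le_card_filter_eq hν⟩
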